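/- Let G be a finite abelian group, δ ∈ [0,1], and g : G → [0,1] with 𝔼_{n∈G} g(n) = δ. Then for every character χ of G with χ² not equal to the trivial character, |ĝ(χ)| ≤ max over m ≥ 3 with m dividing |G| of S(δ,m), where S(δ,m) := |sin(π⌊δm⌋/m)/(m sin(π/m)) + (δ - ⌊δm⌋/m)·e((⌊δm⌋+1)/(2m))|. -/

import Mathlib

open Complex Real Finset

/-- `e(x) = exp(2πix)`. -/
noncomputable def e (x : ℝ) : ℂ := Complex.exp (2 * Real.pi * Complex.I * x)

/-- The extremal bound `S(δ, m)` for linear combinations of `m`-th roots of unity. -/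
noncomputable def S (δ : ℝ) (m : ℕ) : ℝ :=
  ‖((Real.sin (Real.pi * (⌊δ * m⌋ : ℝ) / m) / (m * Real.sin (Real.pi / m)) : ℝ)
      + ((δ - (⌊δ * m⌋ : ℝ) / m : ℝ) : ℂ) * e (((⌊δ * m⌋ : ℝ) + 1) / (2 * m)))‖

namespace Aux

lemma e_def' (x : ℝ) : e x = Complex.exp ((2 * Real.pi * x : ℝ) * Complex.I) := by
  unfold e; push_cast; ring_nf

lemma abs_e (x : ℝ) : ‖(e x)‖ = 1 := by
  rw [e_def']; exact Complex.norm_exp_ofReal_mul_I _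

lemma e_add (x y : ℝ) : e (x + y) = e x * e y := by
  unfold e; rw [← Complex.exp_add]; push_cast; ring_nf

lemma e_int (t : ℤ) : e t = 1 := by
  unfold e
  rw [show ((2:ℂ) * (Real.pi:ℂ) * I * (t:ℝ)) = (t:ℤ) * (2 * (Real.pi:ℂ) * I) by push_cast; ring]
  exact Complex.exp_int_mul_two_pi_mul_I t

lemma e_add_int (x : ℝ) (t : ℤ) : e (x + t) = e x := by
  rw [e_add, e_int, mul_one]

lemma conj_e (x : ℝ) : (starRingEnd ℂ) (e x) = e (-x) := by
  rw [e_def', ← Complex.exp_conj, map_mul, Complex.conj_ofReal, Complex.conj_I, e_def']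
  congr 1
  push_cast
  ring

lemma e_cos_sin (x : ℝ) : e x = Real.cos (2*Real.pi*x) + Real.sin (2*Real.pi*x) * I := by
  rw [e_def', Complex.exp_mul_I, Complex.ofReal_cos, Complex.ofReal_sin]

lemma e_sub_e (x : ℝ) : e x - e (-x) = 2 * Real.sin (2*Real.pi*x) * I := by
  rw [e_cos_sin, e_cos_sin, show 2*Real.pi*(-x) = -(2*Real.pi*x) by ring, Real.cos_neg,
    Real.sin_neg]
  push_cast
  ring

lemma e_pow (x : ℝ) (n : ℕ) : e x ^ n = e (n * x) := by
  rw [e_def', e_def', ← Complex.exp_nat_mul]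
  congr 1
  push_cast; ring

lemma exp_div_eq_e (m : ℕ) : Complex.exp (2 * Real.pi * I / m) = e (1 / m) := by
  rw [e_def']
  congr 1
  push_cast
  ring

lemma S_eq (δ : ℝ) (m k : ℕ) (hm : 2 ≤ m) (hk : (⌊δ * m⌋ : ℤ) = k) :
    ‖((∑ i ∈ Finset.range k, e ((i:ℝ) / m)) + ((δ*m - k : ℝ):ℂ) * e ((k:ℝ) / m))‖
      = m * S δ m := by
  have hmR : (0:ℝ) < m := by positivity
  have hπ : (0:ℝ) < Real.pi := Real.pi_pos
  have hm2 : (2:ℝ) ≤ m := by exact_mod_cast hm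
  have hsin : 0 < Real.sin (Real.pi/m) := by
    apply Real.sin_pos_of_pos_of_lt_pi (by positivity)
    rw [div_lt_iff₀ hmR]
    nlinarith
  set μ : ℂ := e (1/(2*m)) - e (-(1/(2*m))) with hμdef
  have hsinC : ((Real.sin (Real.pi/m) : ℝ):ℂ) ≠ 0 := by
    exact_mod_cast hsin.ne'
  have hμ : μ = 2 * (Real.sin (Real.pi/m) : ℂ) * I := by
    rw [hμdef, e_sub_e, show 2*Real.pi*(1/(2*(m:ℝ))) = Real.pi/(m:ℝ) by field_simp]
  have hμ0 : μ ≠ 0 := by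
    rw [hμ]
    exact mul_ne_zero (mul_ne_zero two_ne_zero hsinC) Complex.I_ne_zero
  have hgeom : (∑ i ∈ Finset.range k, e ((i:ℝ)/m)) * μ
      = e ((2*(k:ℝ)-1)/(2*m)) - e (-(1/(2*m))) := by
    rw [Finset.sum_mul]
    have hpt : ∀ i ∈ Finset.range k, e ((i:ℝ)/m) * μ
        = (fun i : ℕ => e ((2*(i:ℝ)-1)/(2*m))) (i+1) - (fun i : ℕ => e ((2*(i:ℝ)-1)/(2*m))) i := by
      intro i _
      simp only
      rw [hμdef, mul_sub, ← e_add, ← e_add]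
      congr 2
      · push_cast; ring
      · push_cast; ring
    rw [Finset.sum_congr rfl hpt, Finset.sum_range_sub (fun i : ℕ => e ((2*(i:ℝ)-1)/(2*m))) k]
    congr 2
    push_cast
    ring
  have hform : (∑ i ∈ Finset.range k, e ((i:ℝ)/m))
      = e (((k:ℝ)-1)/(2*m)) * ((Real.sin (Real.pi*k/m) / Real.sin (Real.pi/m) : ℝ):ℂ) := by
    apply mul_right_cancel₀ hμ0
    rw [hgeom]
    symm
    have h8 : (2 * (Real.sin (Real.pi * (k:ℝ) / m) : ℂ) * I) = e ((k:ℝ)/(2*m)) - e (-((k:ℝ)/(2*m))) := by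
      rw [e_sub_e]
      congr 2
      field_simp
    have hcancel : ((Real.sin (Real.pi*k/m) / Real.sin (Real.pi/m) : ℝ):ℂ) * (2 * (Real.sin (Real.pi/m) : ℂ) * I)
        = 2 * (Real.sin (Real.pi * (k:ℝ) / m) : ℂ) * I := by
      calc ((Real.sin (Real.pi*k/m) / Real.sin (Real.pi/m) : ℝ):ℂ) * (2 * (Real.sin (Real.pi/m) : ℂ) * I)
          = ((Real.sin (Real.pi*k/m) / Real.sin (Real.pi/m) * Real.sin (Real.pi/m) : ℝ):ℂ) * (2 * I) := by
            push_cast; ring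
        _ = ((Real.sin (Real.pi*(k:ℝ)/m) : ℝ):ℂ) * (2 * I) := by
            rw [div_mul_cancel₀ _ hsin.ne']
        _ = 2 * (Real.sin (Real.pi * (k:ℝ) / m) : ℂ) * I := by ring
    calc e (((k:ℝ)-1)/(2*m)) * ((Real.sin (Real.pi*k/m) / Real.sin (Real.pi/m) : ℝ):ℂ) * μ
        = e (((k:ℝ)-1)/(2*m)) * (2 * (Real.sin (Real.pi * (k:ℝ) / m) : ℂ) * I) := by
          rw [hμ, mul_assoc, hcancel]
      _ = e (((k:ℝ)-1)/(2*m)) * (e ((k:ℝ)/(2*m)) - e (-((k:ℝ)/(2*m)))) := by rw [h8]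
      _ = e ((2*(k:ℝ)-1)/(2*m)) - e (-(1/(2*m))) := by
          rw [mul_sub, ← e_add, ← e_add]
          congr 2
          · field_simp; ring
          · field_simp; ring
  have hksplit : e ((k:ℝ)/m) = e (((k:ℝ)-1)/(2*m)) * e (((k:ℝ)+1)/(2*m)) := by
    rw [← e_add]
    congr 1
    field_simp
    ring
  have hfactor : (∑ i ∈ Finset.range k, e ((i:ℝ) / m)) + ((δ*m - k : ℝ):ℂ) * e ((k:ℝ) / m)
      = e (((k:ℝ)-1)/(2*m)) *
        (((Real.sin (Real.pi*k/m) / Real.sin (Real.pi/m) : ℝ):ℂ)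
          + ((δ*m - k : ℝ):ℂ) * e (((k:ℝ)+1)/(2*m))) := by
    rw [hform, hksplit]
    ring
  rw [hfactor, norm_mul, abs_e, one_mul]
  -- now the S side
  have hfl : ((⌊δ * m⌋ : ℤ) : ℝ) = (k:ℝ) := by exact_mod_cast congrArg (Int.cast : ℤ → ℝ) hk
  have hSm : (m:ℝ) * S δ m = ‖((m:ℂ) *
      (((Real.sin (Real.pi * (⌊δ * m⌋:ℝ) / m) / (m * Real.sin (Real.pi / m)) : ℝ):ℂ)
        + ((δ - (⌊δ * m⌋:ℝ) / m : ℝ) : ℂ) * e (((⌊δ * m⌋:ℝ) + 1) / (2 * m))))‖ := by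
    rw [norm_mul, Complex.norm_natCast, S]
  have hmC0 : ((m:ℝ):ℂ) ≠ 0 := by
    exact_mod_cast hmR.ne'
  have hfinal : ((m:ℂ) *
      (((Real.sin (Real.pi * (⌊δ * m⌋:ℝ) / m) / (m * Real.sin (Real.pi / m)) : ℝ):ℂ)
        + ((δ - (⌊δ * m⌋:ℝ) / m : ℝ) : ℂ) * e (((⌊δ * m⌋:ℝ) + 1) / (2 * m))))
      = (((Real.sin (Real.pi*k/m) / Real.sin (Real.pi/m) : ℝ):ℂ)
          + ((δ*m - k : ℝ):ℂ) * e (((k:ℝ)+1)/(2*m))) := by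
    rw [hfl]
    have c1 : (m:ℂ) * ((Real.sin (Real.pi*(k:ℝ)/m) / ((m:ℝ) * Real.sin (Real.pi/m)) : ℝ):ℂ)
        = ((Real.sin (Real.pi*(k:ℝ)/m) / Real.sin (Real.pi/m) : ℝ):ℂ) := by
      rw [← Complex.ofReal_natCast, ← Complex.ofReal_mul]
      congr 1
      field_simp
    have c2 : (m:ℂ) * (((δ - (k:ℝ)/m : ℝ):ℂ) * e (((k:ℝ)+1)/(2*m)))
        = ((δ*m - (k:ℝ) : ℝ):ℂ) * e (((k:ℝ)+1)/(2*m)) := by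
      rw [← mul_assoc, ← Complex.ofReal_natCast, ← Complex.ofReal_mul]
      congr 2
      field_simp
    rw [mul_add, c1, c2]
  rw [hSm, hfinal]


end Aux

namespace Aux2

lemma Ico_succ_top (a b : ℤ) (h : a ≤ b) :
    Finset.Ico a (b+1) = insert b (Finset.Ico a b) := by
  ext j
  simp only [Finset.mem_Ico, Finset.mem_insert]
  omega

lemma sum_Ico_succ_top' {M : Type*} [AddCommMonoid M] (f : ℤ → M) (a b : ℤ) (h : a ≤ b) :
    ∑ j ∈ Finset.Ico a (b+1), f j = (∑ j ∈ Finset.Ico a b, f j) + f b := by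
  rw [Ico_succ_top a b h, Finset.sum_insert (by simp)]
  exact add_comm _ _

lemma sum_Ico_int {M : Type*} [AddCommMonoid M] (f : ℤ → M) (n : ℤ) (k : ℕ) :
    ∑ j ∈ Finset.Ico n (n + k), f j = ∑ i ∈ Finset.range k, f (n + i) := by
  induction k with
  | zero => simp
  | succ k ih =>
    rw [show ((k+1:ℕ):ℤ) = (k:ℤ)+1 by push_cast; ring, show n + ((k:ℤ)+1) = (n + k) + 1 by ring,
      sum_Ico_succ_top' f n (n+k) (by omega), ih, Finset.sum_range_succ]

lemma periodic_shift {M : Type*} [AddCommGroup M] (f : ℤ → M) (m : ℕ)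
    (hf : ∀ j, f (j + m) = f j) (n : ℤ) :
    ∑ j ∈ Finset.Ico n (n + m), f j = ∑ j ∈ Finset.Ico (0:ℤ) m, f j := by
  rcases Nat.eq_zero_or_pos m with hm | hm
  · simp [hm]
  have step : ∀ t : ℤ, ∑ j ∈ Finset.Ico (t+1) (t + 1 + m), f j
      = ∑ j ∈ Finset.Ico t (t + m), f j := by
    intro t
    have hins : Finset.Ico t (t+1+(m:ℤ)) = insert t (Finset.Ico (t+1) (t+1+m)) := by
      ext j
      simp only [Finset.mem_Ico, Finset.mem_insert]
      omega
    have h1 : ∑ j ∈ Finset.Ico t (t+1+(m:ℤ)), f j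
        = f t + ∑ j ∈ Finset.Ico (t+1) (t+1+m), f j := by
      rw [hins, Finset.sum_insert (by simp)]
    have h2 : ∑ j ∈ Finset.Ico t (t+1+(m:ℤ)), f j
        = (∑ j ∈ Finset.Ico t (t+m), f j) + f t := by
      rw [show t+1+(m:ℤ) = (t+m)+1 by ring,
        sum_Ico_succ_top' f t (t+m) (by omega), hf]
    have h3 := h1.symm.trans h2
    rw [add_comm ((∑ j ∈ Finset.Ico t (t+m), f j)) (f t)] at h3
    exact add_left_cancel h3
  induction n using Int.induction_on with
  | zero => simp
  | succ i ih => rw [step i, ih]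
  | pred i ih =>
    have h4 := step (-(i:ℤ)-1)
    rw [show (-(i:ℤ)-1+1) = -(i:ℤ) by ring] at h4
    show ∑ j ∈ Finset.Ico (-(i:ℤ)-1) (-(i:ℤ)-1 + m), f j = _
    rw [← h4]
    exact ih

end Aux2

namespace Core
open Aux Aux2

lemma abs_eq_re_conj_arg (z : ℂ) :
    (‖z‖ : ℂ) = (starRingEnd ℂ) (Complex.exp (z.arg * I)) * z := by
  have h : Complex.exp (z.arg * I) * (starRingEnd ℂ) (Complex.exp (z.arg * I)) = 1 := by
    rw [Complex.mul_conj, Complex.normSq_eq_norm_sq, Complex.norm_exp_ofReal_mul_I]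
    norm_num
  have h2 : (starRingEnd ℂ) (Complex.exp (z.arg * I)) * z
      = (starRingEnd ℂ) (Complex.exp (z.arg * I)) * (↑(‖z‖) * Complex.exp (z.arg * I)) := by
    rw [Complex.norm_mul_exp_arg_mul_I z]
  rw [h2, show (starRingEnd ℂ) (Complex.exp (z.arg * I)) * (↑(‖z‖) * Complex.exp (z.arg * I)) = ↑(‖z‖) * (Complex.exp (z.arg * I) * (starRingEnd ℂ) (Complex.exp (z.arg * I))) by ring, h, mul_one]

set_option maxHeartbeats 1000000 in
lemma core (m k : ℕ) (hk : k < m) (A : ℤ → ℝ) (α : ℝ)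
    (hA0 : ∀ j, 0 ≤ A j) (hA1 : ∀ j, A j ≤ 1)
    (hper : ∀ j : ℤ, A (j + m) = A j)
    (hsum : ∑ j ∈ Finset.Ico (0:ℤ) (m:ℤ), A j = k + α) :
    ‖(∑ j ∈ Finset.Ico (0:ℤ) (m:ℤ), (A j : ℂ) * e (j / m))‖ ≤
      ‖((∑ i ∈ Finset.range k, e (i / m)) + α * e (k / m))‖ := by
  classical
  have hm0 : 0 < m := by omega
  have hmR : (0:ℝ) < m := by exact_mod_cast hm0
  have hπ : (0:ℝ) < Real.pi := Real.pi_pos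
  set z : ℂ := ∑ j ∈ Finset.Ico (0:ℤ) (m:ℤ), (A j : ℂ) * e (j / m) with hzdef
  set θ : ℝ := z.arg with hθ
  set x : ℝ := m * θ / (2 * Real.pi) with hxdef
  set r : ℕ := k + 1 with hrdef
  have hrm : (r:ℝ) ≤ m := by exact_mod_cast hk
  set n : ℤ := ⌈x - r / 2⌉ with hndef
  set c : ℤ → ℝ := fun j => Real.cos (2 * Real.pi / m * (j - x)) with hcdef
  set u : ℂ := Complex.exp ((θ:ℂ) * I) with hudef
  -- pointwise real part computation
  have hre : ∀ j : ℤ, ((starRingEnd ℂ) u * e ((j:ℝ) / m)).re = c j := by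
    intro j
    have h1 : (starRingEnd ℂ) u = Complex.exp (((-θ : ℝ) : ℂ) * I) := by
      rw [hudef, ← Complex.exp_conj, map_mul, Complex.conj_I]
      norm_cast
      rw [Complex.conj_ofReal]
      push_cast
      ring_nf
    rw [h1, e_def', ← Complex.exp_add,
      show ((-θ:ℝ):ℂ) * I + ((2*Real.pi*((j:ℝ)/m) : ℝ):ℂ) * I
        = ((2*Real.pi*((j:ℝ)/m) - θ : ℝ) : ℂ) * I by push_cast; ring,
      Complex.exp_ofReal_mul_I_re]
    have harg : 2*Real.pi*((j:ℝ)/m) - θ = 2 * Real.pi / m * ((j:ℝ) - x) := by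
      rw [hxdef]; field_simp
    rw [hcdef, harg]
  -- window
  have hfper : ∀ j : ℤ, (fun j : ℤ => (A j : ℂ) * e ((j:ℝ) / m)) (j + m)
      = (fun j : ℤ => (A j : ℂ) * e ((j:ℝ) / m)) j := by
    intro j
    simp only
    rw [hper j, show (((j + (m:ℤ) : ℤ)):ℝ)/m = (j:ℝ)/m + ((1:ℤ):ℝ) by push_cast; field_simp,
      e_add_int]
  have hzW : z = ∑ j ∈ Finset.Ico n (n + m), (A j:ℂ) * e ((j:ℝ)/m) :=
    (Aux2.periodic_shift _ m hfper n).symm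
  have habs : (‖z‖ : ℝ) = ∑ j ∈ Finset.Ico n (n + m), A j * c j := by
    have h2 : (‖z‖ : ℝ) = ((starRingEnd ℂ) u * z).re := by
      rw [hudef, hθ, ← abs_eq_re_conj_arg z, Complex.ofReal_re]
    rw [h2, hzW, Finset.mul_sum, Complex.re_sum]
    refine Finset.sum_congr rfl (fun j hj => ?_)
    rw [show (starRingEnd ℂ) u * ((A j:ℂ) * e ((j:ℝ)/m))
        = (A j:ℂ) * ((starRingEnd ℂ) u * e ((j:ℝ)/m)) by ring]
    have : ∀ w : ℂ, ((A j:ℂ) * w).re = A j * w.re := by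
      intro w; simp [Complex.mul_re]
    rw [this, hre j]
  -- location bounds
  have hnl : x - r / 2 ≤ (n:ℝ) := Int.le_ceil _
  have hnu : (n:ℝ) < x - r / 2 + 1 := Int.ceil_lt_add_one _
  have hin : ∀ j ∈ Finset.Ico n (n + (r:ℤ)), |(j:ℝ) - x| ≤ r / 2 := by
    intro j hj
    rw [Finset.mem_Ico] at hj
    have h1 : (n:ℝ) ≤ j := by exact_mod_cast hj.1
    have h2 : (j:ℝ) ≤ n + r - 1 := by
      have : j ≤ n + (r:ℤ) - 1 := by omega
      have h2' : ((j:ℝ)) ≤ ((n + (r:ℤ) - 1 : ℤ) : ℝ) := by exact_mod_cast this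
      push_cast at h2' ⊢
      linarith
    rw [abs_le]
    constructor <;> [linarith; linarith]
  have hic : ∀ j : ℤ, |(j:ℝ) - x| ≤ r / 2 → Real.cos (Real.pi * r / m) ≤ c j := by
    intro j hj
    have h1 : c j = Real.cos (|2 * Real.pi / m * ((j:ℝ) - x)|) := by
      rw [hcdef]; simp only; rw [Real.cos_abs]
    rw [h1]
    apply Real.cos_le_cos_of_nonneg_of_le_pi (abs_nonneg _)
    · rw [div_le_iff₀ hmR]
      nlinarith
    · rw [abs_mul, _root_.abs_of_nonneg (by positivity : (0:ℝ) ≤ 2 * Real.pi / m)]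
      calc 2 * Real.pi / m * |(j:ℝ) - x| ≤ 2 * Real.pi / m * (r / 2) := by
            apply mul_le_mul_of_nonneg_left hj (by positivity)
        _ = Real.pi * r / m := by ring
  have hout : ∀ j ∈ Finset.Ico (n + (r:ℤ)) (n + (m:ℤ)), c j ≤ Real.cos (Real.pi * r / m) := by
    intro j hj
    rw [Finset.mem_Ico] at hj
    have h1 : (n:ℝ) + r ≤ j := by exact_mod_cast hj.1
    have h2 : (j:ℝ) ≤ n + m - 1 := by
      have : j ≤ n + (m:ℤ) - 1 := by omega
      have h2' : ((j:ℝ)) ≤ ((n + (m:ℤ) - 1 : ℤ) : ℝ) := by exact_mod_cast this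
      push_cast at h2' ⊢
      linarith
    have hlow : Real.pi * r / m ≤ 2 * Real.pi / m * ((j:ℝ) - x) := by
      have : (r:ℝ)/2 ≤ (j:ℝ) - x := by linarith
      calc Real.pi * r / m = 2 * Real.pi / m * ((r:ℝ)/2) := by ring
        _ ≤ _ := by apply mul_le_mul_of_nonneg_left this (by positivity)
    have hhigh : 2 * Real.pi / m * ((j:ℝ) - x) ≤ 2 * Real.pi - Real.pi * r / m := by
      have : (j:ℝ) - x ≤ m - (r:ℝ)/2 := by linarith
      calc 2 * Real.pi / m * ((j:ℝ) - x) ≤ 2 * Real.pi / m * ((m:ℝ) - (r:ℝ)/2) := by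
            apply mul_le_mul_of_nonneg_left this (by positivity)
        _ = 2 * Real.pi - Real.pi * r / m := by field_simp
    set t : ℝ := 2 * Real.pi / m * ((j:ℝ) - x) with htdef
    have hrpos : (0:ℝ) < r := by positivity
    have hπrm : 0 ≤ Real.pi * r / m := by positivity
    rcases le_or_gt t Real.pi with hcase | hcase
    · exact Real.cos_le_cos_of_nonneg_of_le_pi hπrm hcase hlow
    · have h3 : c j = Real.cos (2 * Real.pi - t) := by
        rw [hcdef]; simp only [← htdef]; rw [Real.cos_two_pi_sub]
      rw [h3]
      apply Real.cos_le_cos_of_nonneg_of_le_pi hπrm (by linarith) (by linarith)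
  -- choose worse endpoint
  set j₀ : ℤ := if |((n:ℝ)) - x| ≥ |((n:ℝ) + k) - x| then n else n + k with hj₀def
  have hj₀I : j₀ ∈ Finset.Ico n (n + (r:ℤ)) := by
    rw [hj₀def]
    split_ifs <;> (rw [Finset.mem_Ico] <;> omega)
  have hcastnk : (((n + (k:ℤ)):ℤ):ℝ) = (n:ℝ) + k := by push_cast; ring
  have hj₀max : ∀ j ∈ Finset.Ico n (n + (r:ℤ)), |(j:ℝ) - x| ≤ |(j₀:ℝ) - x| := by
    intro j hj
    rw [Finset.mem_Ico] at hj
    have hb1 : (n:ℝ) - x ≤ (j:ℝ) - x := by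
      have : (n:ℝ) ≤ j := by exact_mod_cast hj.1
      linarith
    have hb2 : (j:ℝ) - x ≤ ((n:ℝ) + k) - x := by
      have : (j:ℝ) ≤ ((n + (k:ℤ) : ℤ):ℝ) := by exact_mod_cast (by omega : j ≤ n + (k:ℤ))
      rw [hcastnk] at this
      linarith
    have hmax := abs_le_max_abs_abs hb1 hb2
    rw [hj₀def]
    split_ifs with hcond
    · rw [max_eq_left hcond] at hmax; exact hmax
    · push_neg at hcond
      rw [max_eq_right hcond.le] at hmax
      rw [hcastnk]
      exact hmax
  have hj₀r : |(j₀:ℝ) - x| ≤ r / 2 := hin j₀ hj₀I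
  have hj₀c : ∀ j ∈ Finset.Ico n (n + (r:ℤ)), c j₀ ≤ c j := by
    intro j hj
    have h1 : ∀ i : ℤ, c i = Real.cos (2 * Real.pi / m * |(i:ℝ) - x|) := by
      intro i
      rw [hcdef]
      simp only
      rw [← Real.cos_abs (2 * Real.pi / m * ((i:ℝ) - x)), abs_mul,
        _root_.abs_of_nonneg (by positivity : (0:ℝ) ≤ 2 * Real.pi / m)]
    rw [h1 j, h1 j₀]
    apply Real.cos_le_cos_of_nonneg_of_le_pi (by positivity)
    · calc 2 * Real.pi / m * |(j₀:ℝ) - x| ≤ 2 * Real.pi / m * ((r:ℝ)/2) := by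
            apply mul_le_mul_of_nonneg_left hj₀r (by positivity)
        _ = Real.pi * r / m := by ring
        _ ≤ Real.pi := by rw [div_le_iff₀ hmR]; nlinarith
    · exact mul_le_mul_of_nonneg_left (hj₀max j hj) (by positivity)
  have hj₀lb : Real.cos (Real.pi * r / m) ≤ c j₀ := hic j₀ hj₀r
  -- the extremal configuration
  set bf : ℤ → ℝ := fun j => if j ∈ Finset.Ico n (n + (r:ℤ)) then (if j = j₀ then α else 1) else 0
    with hbfdef
  have hIW : Finset.Ico n (n + (r:ℤ)) ⊆ Finset.Ico n (n + (m:ℤ)) := by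
    apply Finset.Ico_subset_Ico le_rfl
    omega
  have hsumA' : ∑ j ∈ Finset.Ico n (n + (m:ℤ)), A j = k + α := by
    rw [Aux2.periodic_shift A m hper n]
    exact hsum
  have hsumb : ∑ j ∈ Finset.Ico n (n + (m:ℤ)), bf j = k + α := by
    rw [← Finset.sum_subset hIW (by
      intro j hj hjn
      rw [hbfdef]
      simp only
      rw [if_neg hjn])]
    have hcongr : ∀ j ∈ Finset.Ico n (n + (r:ℤ)), bf j = 1 + (if j = j₀ then α - 1 else 0) := by
      intro j hj
      rw [hbfdef]
      simp only
      rw [if_pos hj]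
      split_ifs <;> ring
    rw [Finset.sum_congr rfl hcongr, Finset.sum_add_distrib, Finset.sum_ite_eq' _ j₀ (fun _ => α - 1),
      if_pos hj₀I, Finset.sum_const, Int.card_Ico]
    have : ((n + (r:ℤ) - n).toNat) = r := by omega
    rw [this, hrdef]
    push_cast
    ring
  -- threshold comparison
  have hkey : ∑ j ∈ Finset.Ico n (n + (m:ℤ)), A j * c j
      ≤ ∑ j ∈ Finset.Ico n (n + (m:ℤ)), bf j * c j := by
    have hterm : ∀ j ∈ Finset.Ico n (n + (m:ℤ)), A j * c j ≤ bf j * c j + (A j - bf j) * c j₀ := by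
      intro j hj
      by_cases hjI : j ∈ Finset.Ico n (n + (r:ℤ))
      · by_cases hjj : j = j₀
        · have : bf j = α := by rw [hbfdef]; simp only; rw [if_pos hjI, if_pos hjj]
          rw [this, hjj]
          ring_nf
          exact le_refl _
        · have hbf1 : bf j = 1 := by rw [hbfdef]; simp only; rw [if_pos hjI, if_neg hjj]
          have := hj₀c j hjI
          have := hA1 j
          nlinarith
      · have hbf0 : bf j = 0 := by rw [hbfdef]; simp only; rw [if_neg hjI]
        have hjout : j ∈ Finset.Ico (n + (r:ℤ)) (n + (m:ℤ)) := by
          rw [Finset.mem_Ico] at hj hjI ⊢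
          omega
        have h1 := hout j hjout
        have h2 := hA0 j
        rw [hbf0]
        nlinarith
    calc ∑ j ∈ Finset.Ico n (n + (m:ℤ)), A j * c j
        ≤ ∑ j ∈ Finset.Ico n (n + (m:ℤ)), (bf j * c j + (A j - bf j) * c j₀) :=
          Finset.sum_le_sum hterm
      _ = ∑ j ∈ Finset.Ico n (n + (m:ℤ)), bf j * c j
          + ((∑ j ∈ Finset.Ico n (n + (m:ℤ)), A j) - ∑ j ∈ Finset.Ico n (n + (m:ℤ)), bf j) * c j₀ := by
          rw [Finset.sum_add_distrib, ← Finset.sum_mul, Finset.sum_sub_distrib]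
      _ = ∑ j ∈ Finset.Ico n (n + (m:ℤ)), bf j * c j := by
          rw [hsumA', hsumb]
          ring
  -- identify the b-sum
  have hbc : ∑ j ∈ Finset.Ico n (n + (m:ℤ)), bf j * c j
      = α * c j₀ + ∑ j ∈ (Finset.Ico n (n + (r:ℤ))).erase j₀, c j := by
    rw [← Finset.sum_subset hIW (by
      intro j hj hjn
      rw [hbfdef]
      simp only
      rw [if_neg hjn, zero_mul])]
    rw [← Finset.add_sum_erase _ _ hj₀I]
    congr 1
    · have hb : bf j₀ = α := by
        rw [hbfdef]
        simp only
        rw [if_pos hj₀I]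
        simp
      rw [hb]
    · refine Finset.sum_congr rfl (fun j hj => ?_)
      rw [Finset.mem_erase] at hj
      rw [hbfdef]
      simp only
      rw [if_pos hj.2, if_neg hj.1, one_mul]
  -- pass to complex and bound by abs
  set Wc : ℂ := (α:ℂ) * e ((j₀:ℝ)/m) + ∑ j ∈ (Finset.Ico n (n + (r:ℤ))).erase j₀, e ((j:ℝ)/m)
    with hWcdef
  have hre2 : α * c j₀ + ∑ j ∈ (Finset.Ico n (n + (r:ℤ))).erase j₀, c j
      = ((starRingEnd ℂ) u * Wc).re := by
    rw [hWcdef, mul_add, Complex.add_re, Finset.mul_sum, Complex.re_sum]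
    congr 1
    · rw [show (starRingEnd ℂ) u * ((α:ℂ) * e ((j₀:ℝ)/m)) = (α:ℂ) * ((starRingEnd ℂ) u * e ((j₀:ℝ)/m)) by ring]
      have : ∀ w : ℂ, ((α:ℂ) * w).re = α * w.re := by intro w; simp [Complex.mul_re]
      rw [this, hre j₀]
    · exact Finset.sum_congr rfl (fun j hj => (hre j).symm)
  have habsconj : ‖((starRingEnd ℂ) u * Wc)‖ = ‖Wc‖ := by
    rw [norm_mul, Complex.norm_conj, hudef, Complex.norm_exp_ofReal_mul_I, one_mul]
  have hfinineq : ‖z‖ ≤ ‖Wc‖ := by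
    rw [habs]
    calc ∑ j ∈ Finset.Ico n (n + (m:ℤ)), A j * c j
        ≤ ∑ j ∈ Finset.Ico n (n + (m:ℤ)), bf j * c j := hkey
      _ = α * c j₀ + ∑ j ∈ (Finset.Ico n (n + (r:ℤ))).erase j₀, c j := hbc
      _ = ((starRingEnd ℂ) u * Wc).re := hre2
      _ ≤ ‖((starRingEnd ℂ) u * Wc)‖ := Complex.re_le_norm _
      _ = ‖Wc‖ := habsconj
  -- identify |Wc| with the canonical extremizer
  have hrcast : (r:ℤ) = (k:ℤ) + 1 := by rw [hrdef]; push_cast; ring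
  have hWfinal : ‖Wc‖ = ‖((∑ i ∈ Finset.range k, e ((i:ℝ) / m)) + (α:ℂ) * e ((k:ℝ) / m))‖ := by
    by_cases hcond : |((n:ℝ)) - x| ≥ |((n:ℝ) + k) - x|
    · -- j₀ = n : left endpoint case
      have hj0 : j₀ = n := by rw [hj₀def, if_pos hcond]
      have herase : (Finset.Ico n (n + (r:ℤ))).erase j₀ = Finset.Ico (n+1) ((n+1) + (k:ℤ)) := by
        rw [hj0]
        ext j
        simp only [Finset.mem_erase, Finset.mem_Ico, hrcast]
        omega
      have hsum1 : ∑ j ∈ (Finset.Ico n (n + (r:ℤ))).erase j₀, e ((j:ℝ)/m)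
          = ∑ i ∈ Finset.range k, e ((n:ℝ)/m) * e (((i:ℝ)+1)/m) := by
        rw [herase, Aux2.sum_Ico_int (fun j : ℤ => e ((j:ℝ)/m)) (n+1) k]
        refine Finset.sum_congr rfl (fun i _ => ?_)
        rw [← e_add]
        congr 1
        push_cast
        ring
      have hWc2 : Wc = e ((n:ℝ)/m) * ((α:ℂ) + ∑ i ∈ Finset.range k, e (((i:ℝ)+1)/m)) := by
        rw [hWcdef, hsum1, hj0, ← Finset.mul_sum]
        ring
      rw [hWc2, norm_mul, abs_e, one_mul]
      set v : ℂ := (α:ℂ) + ∑ i ∈ Finset.range k, e (((i:ℝ)+1)/m) with hvdef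
      have h3 : ‖v‖ = ‖((starRingEnd ℂ) v)‖ := (Complex.norm_conj v).symm
      have h4 : (starRingEnd ℂ) v = (α:ℂ) + ∑ i ∈ Finset.range k, e (-(((i:ℝ)+1)/m)) := by
        rw [hvdef, map_add, Complex.conj_ofReal, map_sum]
        congr 1
        exact Finset.sum_congr rfl (fun i _ => conj_e _)
      have h5 : ‖((starRingEnd ℂ) v)‖
          = ‖(e ((k:ℝ)/m) * ((starRingEnd ℂ) v))‖ := by
        rw [norm_mul, abs_e, one_mul]
      rw [h3, h5, h4, mul_add, Finset.mul_sum]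
      have h6 : ∀ i ∈ Finset.range k, e ((k:ℝ)/m) * e (-(((i:ℝ)+1)/m))
          = (fun i : ℕ => e ((i:ℝ)/m)) (k - 1 - i) := by
        intro i hi
        rw [Finset.mem_range] at hi
        rw [← e_add]
        simp only
        congr 1
        have h7 : (k - 1 - i : ℕ) = k - (i+1) := by omega
        rw [h7]
        rw [Nat.cast_sub (by omega : i + 1 ≤ k)]
        push_cast
        ring
      rw [Finset.sum_congr rfl h6, Finset.sum_range_reflect (fun i : ℕ => e ((i:ℝ)/m)) k]
      rw [add_comm]
      congr 1
      rw [mul_comm]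
    · -- j₀ = n + k : right endpoint case
      have hj0 : j₀ = n + k := by rw [hj₀def, if_neg hcond]
      have herase : (Finset.Ico n (n + (r:ℤ))).erase j₀ = Finset.Ico n (n + (k:ℤ)) := by
        rw [hj0]
        ext j
        simp only [Finset.mem_erase, Finset.mem_Ico, hrcast]
        omega
      have hsum1 : ∑ j ∈ (Finset.Ico n (n + (r:ℤ))).erase j₀, e ((j:ℝ)/m)
          = ∑ i ∈ Finset.range k, e ((n:ℝ)/m) * e ((i:ℝ)/m) := by
        rw [herase, Aux2.sum_Ico_int (fun j : ℤ => e ((j:ℝ)/m)) n k]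
        refine Finset.sum_congr rfl (fun i _ => ?_)
        rw [← e_add]
        congr 1
        push_cast
        ring
      have hWc2 : Wc = e ((n:ℝ)/m) * ((α:ℂ) * e ((k:ℝ)/m) + ∑ i ∈ Finset.range k, e ((i:ℝ)/m)) := by
        rw [hWcdef, hsum1, hj0, ← Finset.mul_sum,
          show ((((n + (k:ℤ)):ℤ)):ℝ)/m = (n:ℝ)/m + (k:ℝ)/m by push_cast; ring, e_add]
        ring
      rw [hWc2, norm_mul, abs_e, one_mul, add_comm]
  calc ‖z‖ ≤ ‖Wc‖ := hfinineq
    _ = _ := hWfinal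

end Core

set_option maxHeartbeats 1600000 in
theorem stmt_4 {G : Type*} [CommGroup G] [Fintype G]
    (δ : ℝ) (hδ : δ ∈ Set.Icc (0:ℝ) 1)
    (g : G → ℝ) (hg : ∀ n, g n ∈ Set.Icc (0:ℝ) 1)
    (havg : (∑ n : G, g n) / Fintype.card G = δ)
    (χ : G →* ℂ) (hχ : χ ^ 2 ≠ 1) :
    ∃ m : ℕ, 3 ≤ m ∧ m ∣ Fintype.card G ∧
      ‖((∑ n : G, (g n : ℂ) * (starRingEnd ℂ) (χ n)) / Fintype.card G)‖ ≤ S δ m := by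
  classical
  set N := Fintype.card G with hNdef
  have hN0 : 0 < N := Fintype.card_pos
  have hNR : (0:ℝ) < N := by exact_mod_cast hN0
  have hχN : χ ^ N = 1 := by
    ext n
    rw [MonoidHom.pow_apply, MonoidHom.one_apply, ← map_pow, pow_card_eq_one, map_one]
  set m := orderOf χ with hmdef
  have hfin : IsOfFinOrder χ := isOfFinOrder_iff_pow_eq_one.mpr ⟨N, hN0, hχN⟩
  have hm0 : 0 < m := hfin.orderOf_pos
  have hmdvd : m ∣ N := orderOf_dvd_of_pow_eq_one hχN
  have hm3 : 3 ≤ m := by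
    by_contra hcon
    push_neg at hcon
    have h12 : m ∣ 2 := by
      have : m = 1 ∨ m = 2 := by omega
      rcases this with h | h <;> rw [h]
      · exact one_dvd 2
    exact hχ (orderOf_dvd_iff_pow_eq_one.mp h12)
  have hmR : (0:ℝ) < m := by exact_mod_cast hm0
  refine ⟨m, hm3, hmdvd, ?_⟩
  have hχm : ∀ n : G, χ n ^ m = 1 := by
    intro n
    have h1 := pow_orderOf_eq_one χ
    rw [← hmdef] at h1
    calc χ n ^ m = (χ ^ m) n := (MonoidHom.pow_apply χ m n).symm
      _ = 1 := by rw [h1]; rfl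
  rcases eq_or_lt_of_le hδ.2 with hδ1 | hδlt
  · -- δ = 1 : g ≡ 1 and the sum vanishes
    have hsumg : ∑ n : G, g n = N := by
      field_simp at havg
      rw [havg, hδ1, mul_one]
    have hg1 : ∀ n : G, g n = 1 := by
      have hzero : ∑ n : G, (1 - g n) = 0 := by
        rw [Finset.sum_sub_distrib, Finset.sum_const, Finset.card_univ, hsumg]
        simp [hNdef]
      have h6 := (Finset.sum_eq_zero_iff_of_nonneg
        (fun n _ => by linarith [(hg n).2] : ∀ n ∈ Finset.univ, 0 ≤ 1 - g n)).mp hzero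
      intro n
      have := h6 n (Finset.mem_univ n)
      linarith
    have hχne : χ ≠ 1 := by
      intro h
      exact hχ (by rw [h, one_pow])
    obtain ⟨y, hy⟩ : ∃ y : G, χ y ≠ 1 := by
      by_contra hcon
      push_neg at hcon
      exact hχne (MonoidHom.ext fun n => hcon n)
    have hT : ∑ n : G, χ n = 0 := by
      have h1 : χ y * ∑ n : G, χ n = ∑ n : G, χ n := by
        rw [Finset.mul_sum]
        calc ∑ n : G, χ y * χ n = ∑ n : G, χ (y * n) := by
              refine Finset.sum_congr rfl (fun n _ => (map_mul χ y n).symm)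
          _ = ∑ n : G, χ n :=
              Fintype.sum_bijective (fun n => y * n) (Group.mulLeft_bijective y) _ _
                (fun n => rfl)
      have h2 : (χ y - 1) * ∑ n : G, χ n = 0 := by
        rw [sub_mul, one_mul, h1, sub_self]
      rcases mul_eq_zero.mp h2 with h | h
      · exact absurd (sub_eq_zero.mp h) hy
      · exact h
    have hzero : (∑ n : G, (g n : ℂ) * (starRingEnd ℂ) (χ n)) = 0 := by
      have h7 : ∀ n : G, (g n : ℂ) * (starRingEnd ℂ) (χ n) = (starRingEnd ℂ) (χ n) := by
        intro n; rw [hg1 n]; push_cast; ring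
      rw [Finset.sum_congr rfl (fun n _ => h7 n), ← map_sum, hT, map_zero]
    rw [hzero, zero_div, norm_zero]
    unfold S
    exact norm_nonneg _
  · -- main case : δ < 1
    have hδ0 : 0 ≤ δ := hδ.1
    have hsumg : ∑ n : G, g n = δ * N := by
      field_simp at havg
      rw [havg, mul_comm]
    haveI : NeZero m := ⟨hm0.ne'⟩
    set k : ℕ := (⌊δ * m⌋).toNat with hkdef
    have hkZ : (k:ℤ) = ⌊δ * m⌋ := Int.toNat_of_nonneg (Int.floor_nonneg.mpr (by positivity))
    have hkm : k < m := by
      have h1 : (⌊δ * m⌋ : ℤ) < m := by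
        apply Int.floor_lt.mpr
        push_cast
        nlinarith
      omega
    -- unit-valued character and the image subgroup
    set χu : G →* ℂˣ := MonoidHom.toHomUnits χ with hχu
    have hχuval : ∀ n : G, ((χu n : ℂˣ) : ℂ) = χ n := fun n => rfl
    haveI : Finite (χu.range) := Set.Finite.to_subtype (Set.finite_range χu)
    obtain ⟨ζ, hζ⟩ := IsCyclic.exists_generator (α := χu.range)
    set d := orderOf ζ with hddef
    have hd0 : 0 < d := orderOf_pos ζ
    have hmd : m ∣ d := by
      apply orderOf_dvd_of_pow_eq_one
      ext n
      rw [MonoidHom.pow_apply, MonoidHom.one_apply]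
      have h1 : χu n ∈ χu.range := ⟨n, rfl⟩
      obtain ⟨i, hi⟩ := hζ ⟨χu n, h1⟩
      have h2 : (⟨χu n, h1⟩ : χu.range) ^ d = 1 := by
        rw [← hi, ← zpow_natCast, ← zpow_mul, mul_comm, zpow_mul, zpow_natCast,
          pow_orderOf_eq_one, one_zpow]
      have h3 : χu n ^ d = 1 := by
        have h4 := congrArg (Subgroup.subtype χu.range) h2
        simpa using h4
      rw [← hχuval n, ← Units.val_pow_eq_pow_val, h3, Units.val_one]
    have hdm0 : 0 < d / m := Nat.div_pos (Nat.le_of_dvd hd0 hmd) hm0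
    have hζcoe : orderOf ((ζ : χu.range) : ℂˣ) = d :=
      orderOf_injective (Subgroup.subtype χu.range) (Subgroup.subtype_injective _) ζ
    set w : ℂˣ := ((ζ : χu.range) : ℂˣ) ^ (d / m) with hwdef
    have hwo : orderOf w = m := by
      rw [hwdef, orderOf_pow' _ hdm0.ne', hζcoe, Nat.gcd_eq_right (Nat.div_dvd_of_dvd hmd),
        Nat.div_div_self hmd hd0.ne']
    obtain ⟨n₀, hn₀⟩ : ∃ n₀ : G, χu n₀ = w := by
      obtain ⟨a, ha⟩ := ζ.2
      exact ⟨a ^ (d / m), by rw [map_pow, ha]⟩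
    have hprim : IsPrimitiveRoot (χ n₀) m := by
      have h5 : orderOf (χ n₀) = m := by
        rw [← hχuval n₀, orderOf_units, hn₀, hwo]
      rw [← h5]
      exact IsPrimitiveRoot.orderOf (χ n₀)
    -- surjectivity onto the m-th roots of unity
    have hsurj : ∀ j : ℤ, ∃ n : G, χ n = e ((j:ℝ)/m) := by
      intro j
      have hroot : (e ((j:ℝ)/m)) ^ m = 1 := by
        rw [Aux.e_pow, show (m:ℝ) * ((j:ℝ)/m) = ((j:ℤ):ℝ) by field_simp, Aux.e_int]
      obtain ⟨i, hilt, hie⟩ := hprim.eq_pow_of_pow_eq_one hroot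
      exact ⟨n₀ ^ i, by rw [map_pow, hie]⟩
    -- the exponent function J
    have hexpm := Complex.isPrimitiveRoot_exp m hm0.ne'
    have hepow : ∀ t : ℕ, Complex.exp (2 * Real.pi * I / m) ^ t = e ((t:ℝ)/m) := by
      intro t
      rw [Aux.exp_div_eq_e, Aux.e_pow]
      congr 1
      push_cast
      ring
    have hJex : ∀ n : G, ∃ j : ℕ, j < m ∧ χ n = e ((j:ℝ)/m) := by
      intro n
      obtain ⟨i, hilt, hie⟩ := hexpm.eq_pow_of_pow_eq_one (hχm n)
      exact ⟨i, hilt, by rw [← hie, hepow]⟩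
    choose J hJm hJe using hJex
    have heinj : ∀ i j : ℕ, i < m → j < m → e ((i:ℝ)/m) = e ((j:ℝ)/m) → i = j := by
      intro i j hi hj hij
      exact hexpm.pow_inj hi hj (by rw [hepow, hepow, hij])
    -- fibers
    set F : ℤ → Finset G := fun j => Finset.univ.filter (fun n => χ n = e ((j:ℝ)/m)) with hFdef
    have hmemF : ∀ (j : ℤ) (n : G), n ∈ F j ↔ χ n = e ((j:ℝ)/m) := by
      intro j n
      rw [hFdef]
      simp
    have hcardconst : ∀ j j' : ℤ, (F j).card = (F j').card := by
      intro j j'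
      obtain ⟨a, ha⟩ := hsurj j
      obtain ⟨b, hb⟩ := hsurj j'
      have haux : ∀ (u v : G) (ju jv : ℤ), χ u = e ((ju:ℝ)/m) → χ v = e ((jv:ℝ)/m) →
          ∀ n ∈ F ju, n * u⁻¹ * v ∈ F jv := by
        intro u v ju jv hu hv n hn
        rw [hmemF] at hn ⊢
        calc χ (n * u⁻¹ * v) = χ n * χ u⁻¹ * χ v := by rw [map_mul, map_mul]
          _ = χ (u * u⁻¹) * χ v := by rw [hn, ← hu, ← map_mul]
          _ = e ((jv:ℝ)/m) := by rw [mul_inv_cancel, map_one, one_mul, hv]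
      apply Finset.card_bij' (fun n _ => n * a⁻¹ * b) (fun n _ => n * b⁻¹ * a)
      · intro n hn
        exact haux a b j j' ha hb n hn
      · intro n hn
        exact haux b a j' j hb ha n hn
      · intro n _
        group
      · intro n _
        group
    have hmemIco : ∀ n : G, ((J n : ℤ)) ∈ Finset.Ico (0:ℤ) (m:ℤ) := by
      intro n
      rw [Finset.mem_Ico]
      constructor
      · positivity
      · exact_mod_cast hJm n
    have hfibJ : ∀ j ∈ Finset.Ico (0:ℤ) (m:ℤ),
        Finset.univ.filter (fun n => (J n : ℤ) = j) = F j := by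
      intro j hj
      rw [Finset.mem_Ico] at hj
      ext n
      rw [Finset.mem_filter, hmemF]
      constructor
      · rintro ⟨-, h⟩
        rw [← h, hJe n]
        norm_num
      · intro h
        refine ⟨Finset.mem_univ n, ?_⟩
        have h1 : e (((J n : ℕ):ℝ)/m) = e (((j.toNat : ℕ):ℝ)/m) := by
          rw [← hJe n, h]
          congr 2
          have h10 := Int.toNat_of_nonneg hj.1
          exact_mod_cast h10.symm
        have h2 : J n = j.toNat := heinj _ _ (hJm n) (by omega) h1
        omega
    have htot : ∑ j ∈ Finset.Ico (0:ℤ) (m:ℤ), (F j).card = N := by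
      rw [← Finset.sum_congr rfl (fun j hj => (congrArg Finset.card (hfibJ j hj)))]
      rw [← Finset.card_eq_sum_card_fiberwise (fun n _ => hmemIco n)]
      exact Finset.card_univ
    have hcardN : ∀ j : ℤ, ((F j).card : ℝ) * m = N := by
      intro j
      have hconst : ∀ j' ∈ Finset.Ico (0:ℤ) (m:ℤ), (F j').card = (F j).card :=
        fun j' _ => hcardconst j' j
      rw [Finset.sum_congr rfl hconst, Finset.sum_const, Int.card_Ico] at htot
      have h8 : ((m:ℤ) - 0).toNat = m := by omega
      rw [h8, smul_eq_mul] at htot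
      have h9 : ((m * (F j).card : ℕ) : ℝ) = N := by rw [htot]
      push_cast at h9
      linarith
    -- weights
    set A : ℤ → ℝ := fun j => (∑ x ∈ F j, g x) * m / N with hAdef
    have hA0 : ∀ j, 0 ≤ A j := by
      intro j
      rw [hAdef]
      have h1 : 0 ≤ ∑ x ∈ F j, g x := Finset.sum_nonneg fun x _ => (hg x).1
      positivity
    have hA1 : ∀ j, A j ≤ 1 := by
      intro j
      rw [hAdef]
      simp only
      rw [div_le_one hNR]
      have h1 : ∑ x ∈ F j, g x ≤ ((F j).card : ℝ) := by
        calc ∑ x ∈ F j, g x ≤ ∑ x ∈ F j, 1 := Finset.sum_le_sum (fun x _ => (hg x).2)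
          _ = ((F j).card : ℝ) := by simp
      calc (∑ x ∈ F j, g x) * m ≤ ((F j).card : ℝ) * m :=
            mul_le_mul_of_nonneg_right h1 hmR.le
        _ = N := hcardN j
    have hAper : ∀ j : ℤ, A (j + m) = A j := by
      intro j
      have hFper : F (j + m) = F j := by
        ext n
        rw [hmemF, hmemF,
          show (((j + (m:ℤ)):ℤ):ℝ)/m = (j:ℝ)/m + ((1:ℤ):ℝ) by push_cast; field_simp,
          Aux.e_add_int]
      rw [hAdef]
      simp only
      rw [hFper]
    have hfibsum : ∑ j ∈ Finset.Ico (0:ℤ) (m:ℤ), ∑ x ∈ F j, g x = ∑ n : G, g n := by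
      rw [← Finset.sum_congr rfl (fun j hj => by rw [← hfibJ j hj])]
      exact Finset.sum_fiberwise_of_maps_to (fun n _ => hmemIco n) g
    have hAsum : ∑ j ∈ Finset.Ico (0:ℤ) (m:ℤ), A j = (k:ℝ) + (δ * m - k) := by
      have h1 : ∑ j ∈ Finset.Ico (0:ℤ) (m:ℤ), A j
          = (∑ j ∈ Finset.Ico (0:ℤ) (m:ℤ), ∑ x ∈ F j, g x) * m / N := by
        rw [hAdef, ← Finset.sum_div, ← Finset.sum_mul]
      rw [h1, hfibsum, hsumg]
      field_simp
      ring
    -- decomposition of the character sum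
    set Z : ℂ := ∑ j ∈ Finset.Ico (0:ℤ) (m:ℤ), ((A j : ℝ):ℂ) * e ((j:ℝ)/m) with hZdef
    have hdecomp : (∑ n : G, (g n : ℂ) * (starRingEnd ℂ) (χ n))
        = (((N:ℝ)/m : ℝ) : ℂ) * (starRingEnd ℂ) Z := by
      rw [hZdef, map_sum, Finset.mul_sum,
        ← Finset.sum_fiberwise_of_maps_to (fun n _ => hmemIco n)
          (fun n : G => (g n : ℂ) * (starRingEnd ℂ) (χ n))]
      refine Finset.sum_congr rfl (fun j hj => ?_)
      rw [hfibJ j hj]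
      have h1 : ∀ n ∈ F j, (g n : ℂ) * (starRingEnd ℂ) (χ n) = (g n : ℂ) * e (-((j:ℝ)/m)) := by
        intro n hn
        rw [(hmemF j n).mp hn, Aux.conj_e]
      rw [Finset.sum_congr rfl h1, ← Finset.sum_mul, map_mul]
      rw [Complex.conj_ofReal, Aux.conj_e]
      have h2 : (∑ n ∈ F j, (g n : ℂ)) = ((∑ n ∈ F j, g n : ℝ) : ℂ) := by
        push_cast
        rfl
      rw [h2]
      rw [show (((N:ℝ)/m : ℝ) : ℂ) * (((A j : ℝ):ℂ) * e (-((j:ℝ)/m)))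
          = ((((N:ℝ)/m) * A j : ℝ) : ℂ) * e (-((j:ℝ)/m)) by push_cast; ring]
      congr 2
      rw [hAdef]
      field_simp
    -- final assembly
    have hcore := Core.core m k hkm A (δ * m - k) hA0 hA1 hAper hAsum
    have hSeq := Aux.S_eq δ m k (by omega) hkZ.symm
    rw [hdecomp]
    have habs : ‖((((((N:ℝ)/m : ℝ)) : ℂ) * (starRingEnd ℂ) Z) / (N:ℂ))‖
        = ‖Z‖ / m := by
      rw [norm_div, norm_mul, Complex.norm_conj, Complex.norm_real, Real.norm_eq_abs, Complex.norm_natCast,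
        _root_.abs_of_nonneg (by positivity : (0:ℝ) ≤ (N:ℝ)/m)]
      field_simp
    rw [habs, div_le_iff₀ hmR]
    calc ‖Z‖
        ≤ ‖((∑ i ∈ Finset.range k, e ((i:ℝ) / m)) + (((δ * (m:ℝ) - (k:ℝ)) : ℝ) : ℂ) * e ((k:ℝ) / m))‖ := hcore
      _ = m * S δ m := by rw [← hSeq]
      _ = S δ m * m := by ring
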